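/- arXiv:1602.03518 — 2 statements merged into one kernel-verified Lean document; each statement's English description precedes it below -/
import Mathlib

section
/- If β is a generalized Parry number, then every Galois conjugate z of β satisfies |z| < 2. -/
open Finset

/-- The index `k` such that `x ∈ I_k`, where `I_0 = [0, 1/β]`,
`I_k = (k/β, (k+1)/β]` for `1 ≤ k ≤ m-1` and `I_m = (m/β, 1]`. -/
noncomputable def branchIdx (β x : ℝ) : ℕ := (⌈β * x⌉ - 1).toNat

/-- The generalized β-transformation `f_{β,E}`, where `E` records the signs of the branches. -/
noncomputable def gbeta (β : ℝ) (E : ℕ → ℤ) (x : ℝ) : ℝ :=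
  if E (branchIdx β x) = 1 then β * x - branchIdx β x
  else -(β * x) + branchIdx β x + 1

/-- The sign `e(j)` of the branch containing `f^{j-1}(1)`. -/
noncomputable def esign (β : ℝ) (E : ℕ → ℤ) (j : ℕ) : ℤ :=
  E (branchIdx β ((gbeta β E)^[j - 1] 1))

/-- The cumulative sign `s(j)`, with `s(1) = 1` and `s(j+1) = e(j)·s(j)`. -/
noncomputable def csign (β : ℝ) (E : ℕ → ℤ) (j : ℕ) : ℤ :=
  ∏ l ∈ Finset.Ico 1 j, esign β E l

/-- The digit `d(j)` of the (β,E)-expansion of 1. -/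
noncomputable def digit (β : ℝ) (E : ℕ → ℤ) (j : ℕ) : ℕ :=
  if E (branchIdx β ((gbeta β E)^[j - 1] 1)) = 1
  then branchIdx β ((gbeta β E)^[j - 1] 1)
  else branchIdx β ((gbeta β E)^[j - 1] 1) + 1

/-- The signed orbit `c_j = s(j+1)·f^j(1)`, with `c_0 = 1`. -/
noncomputable def sorbit (β : ℝ) (E : ℕ → ℤ) (j : ℕ) : ℝ :=
  (csign β E (j + 1) : ℝ) * (gbeta β E)^[j] 1

/-- The data `(m, β, E)` is valid for a generalized β-transformation:
`m ≥ 1`, `β ∈ (m, m+1]` and `E(0), …, E(m) ∈ {1, -1}`. -/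
def IsGBetaValid (m : ℕ) (β : ℝ) (E : ℕ → ℤ) : Prop :=
  1 ≤ m ∧ (m : ℝ) < β ∧ β ≤ m + 1 ∧ ∀ k ≤ m, E k = 1 ∨ E k = -1

/-- `f_{β,E}` is post-critically finite: the orbit of `1` is finite. -/
def IsPCF (β : ℝ) (E : ℕ → ℤ) : Prop :=
  Set.Finite {x : ℝ | ∃ j : ℕ, (gbeta β E)^[j] 1 = x}

/-- `β > 1` is a generalized Parry number if some `f_{β,E}` is post-critically finite. -/
def IsGenParry (β : ℝ) : Prop :=
  1 < β ∧ ∃ (m : ℕ) (E : ℕ → ℤ), IsGBetaValid m β E ∧ IsPCF β E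

/-- `z` is a Galois conjugate of `β`: a root of the minimal polynomial of `β` over `ℚ`
different from `β` itself. -/
def IsGaloisConj (z : ℂ) (β : ℝ) : Prop :=
  z ≠ (β : ℂ) ∧ Polynomial.aeval z (minpoly ℚ β) = 0

/-- `Ω`: the set of all Galois conjugates of all generalized Parry numbers. -/
def OmegaSet : Set ℂ := {z : ℂ | ∃ β : ℝ, IsGenParry β ∧ IsGaloisConj z β}

/-- `𝓖`: the set of zeros in the open unit disk of functions
`T(w) = 1 + Σ_{j≥1} a_j w^j` with coefficients `a_j ∈ [-1,1]` (the class `𝓕`). -/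
def mathcalG : Set ℂ :=
  {l : ℂ | ‖l‖ < 1 ∧ ∃ a : ℕ → ℝ, (∀ j : ℕ, a (j + 1) ∈ Set.Icc (-1 : ℝ) 1) ∧
    1 + ∑' j : ℕ, (a (j + 1) : ℂ) * l ^ (j + 1) = 0}

/-- The itinerary data `It(j)` associated to a finite sequence `(s(j), a(j))_{j=1}^n`. -/
def ItSeq (n : ℕ) (s : ℕ → ℤ) (a : ℕ → ℕ) (j : ℕ) : ℕ :=
  if j = n then a n else if s (j + 1) = s j then a j else a j - 1

/-- The tail sum `R_j(x) = Σ_{i=j}^{n-1} s(i+1) a(i+1) x^{-i}`. -/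
noncomputable def RSum (n : ℕ) (s : ℕ → ℤ) (a : ℕ → ℕ) (j : ℕ) (x : ℝ) : ℝ :=
  ∑ i ∈ Finset.Ico j n, (s (i + 1) : ℝ) * (a (i + 1) : ℝ) * x ^ (-(i : ℤ))

/-- `x ∈ I_k`, for the partition of `[0,1]` into
`I_0 = [0, 1/β]`, `I_k = (k/β, (k+1)/β]` for `1 ≤ k ≤ m-1`, `I_m = (m/β, 1]`. -/
def memI (β : ℝ) (m k : ℕ) (x : ℝ) : Prop :=
  if k = 0 then x ∈ Set.Icc (0 : ℝ) (1 / β)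
  else if k = m then x ∈ Set.Ioc ((m : ℝ) / β) 1
  else x ∈ Set.Ioc ((k : ℝ) / β) (((k : ℝ) + 1) / β)

/-!
Write `c_j = s(j+1) f^j(1)` for the signed orbit of `1`. On each branch `f` is `x ↦ ±(βx - d)`,
so `c_{j+1} = β c_j - b_j` with integer signed digits `b_j`, and `c_n = P_n(β)` for the integer
polynomials `P_0 = 1`, `P_{n+1} = X P_n - b_n`. A finite orbit is eventually periodic, and then
`b_{j+r} = σ b_j` and `c_{j+r} = σ c_j` with `σ = ±1` from some `p` on. Hence `β` is a root of the
monic polynomial `Q = P_{p+r} - σ P_p`, and so is every conjugate `z`.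

For `|z| > 1` and `w = 1/z` the identity `(1 - βw) Σ_{j<n} c_j w^j = (P_n(z) - P_n(β)) w^n`, with
`P_n(z)` periodic up to sign (as `Q(z) = 0`) and `c_n ∈ [-1, 1]`, gives `Σ c_j w^j = 0`. A series
`1 + Σ_{j≥1} a_j w^j` with `a_j ∈ [-1, 1]` has no zero in `|w| < 1/2` and none on `|w| = 1/2` except
`±1/2`. So `|z| ≤ 2`, and `z = ±2` is excluded because a rational root of the minimal polynomial of
`β` is `β` itself.
-/

open Polynomial Filter Topology

theorem exists_forall_norm_le_of_norm_add_eq {α : Type*} [SeminormedAddGroup α] {u : ℕ → α}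
    {p r : ℕ} (hr : 0 < r) (hu : ∀ j ≥ p, ‖u (j + r)‖ = ‖u j‖) : ∃ M, ∀ n, ‖u n‖ ≤ M := by
  refine ⟨∑ i ∈ Finset.range (p + r), ‖u i‖, fun n => ?_⟩
  induction n using Nat.strong_induction_on with
  | _ n ih =>
    rcases lt_or_ge n (p + r) with hn | hn
    · exact Finset.single_le_sum (fun i _ => norm_nonneg (u i)) (Finset.mem_range.2 hn)
    · obtain ⟨j, rfl⟩ := Nat.exists_eq_add_of_le' (le_of_add_le_right hn)
      rw [hu j (by omega)]
      exact ih j (by omega)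

theorem Function.iterate_add_eq_of_iterate_add_eq {α : Type*} {f : α → α} {x : α} {p r j : ℕ}
    (h : f^[p + r] x = f^[p] x) (hj : p ≤ j) : f^[j + r] x = f^[j] x := by
  obtain ⟨k, rfl⟩ := Nat.exists_eq_add_of_le hj
  rw [show p + k + r = k + (p + r) by omega, Function.iterate_add_apply, h,
    ← Function.iterate_add_apply, add_comm]

noncomputable def remainderPoly (b : ℕ → ℤ) : ℕ → ℤ[X]
  | 0 => 1
  | n + 1 => X * remainderPoly b n - C (b n)

noncomputable def periodPoly (b : ℕ → ℤ) (p r : ℕ) (σ : ℤ) : ℤ[X] :=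
  remainderPoly b (p + r) - C σ * remainderPoly b p

section RemainderPoly

variable {b : ℕ → ℤ} {p r : ℕ} {σ : ℤ}

theorem degree_remainderPoly (b : ℕ → ℤ) (n : ℕ) : (remainderPoly b n).degree = n := by
  induction n with
  | zero => simp [remainderPoly]
  | succ n ih =>
    have hdeg : (X * remainderPoly b n).degree = ↑(n + 1) := by
      rw [degree_mul, degree_X, ih]; norm_cast; omega
    rw [remainderPoly, degree_sub_eq_left_of_degree_lt, hdeg]
    exact hdeg ▸ degree_C_le.trans_lt (by exact_mod_cast n.succ_pos)

theorem monic_remainderPoly (b : ℕ → ℤ) (n : ℕ) : (remainderPoly b n).Monic := by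
  induction n with
  | zero => exact monic_one
  | succ n ih =>
    refine (monic_X.mul ih).sub_of_left (degree_C_le.trans_lt ?_)
    rw [degree_mul, degree_X, degree_remainderPoly]
    norm_cast
    omega

theorem monic_periodPoly (hr : 0 < r) : (periodPoly b p r σ).Monic := by
  refine (monic_remainderPoly b (p + r)).sub_of_left ((degree_mul_le _ _).trans_lt ?_)
  rw [degree_remainderPoly, degree_remainderPoly]
  calc (C σ).degree + p ≤ 0 + p := add_le_add_left degree_C_le _
    _ < ↑(p + r) := by rw [zero_add]; exact_mod_cast Nat.lt_add_of_pos_right hr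

theorem remainderPoly_add_period_sub (hb : ∀ j ≥ p, b (j + r) = σ * b j) (k : ℕ) :
    remainderPoly b (p + k + r) - C σ * remainderPoly b (p + k) = X ^ k * periodPoly b p r σ := by
  induction k with
  | zero => simp [periodPoly]
  | succ k ih =>
    rw [show p + (k + 1) + r = p + k + r + 1 by omega, ← add_assoc, remainderPoly, remainderPoly,
      hb (p + k) (by omega), pow_succ', mul_assoc, ← ih, C_mul]
    ring

theorem aeval_remainderPoly_add_period {A : Type*} [CommRing A] {z : A}
    (hb : ∀ j ≥ p, b (j + r) = σ * b j) (hz : aeval z (periodPoly b p r σ) = 0) {j : ℕ}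
    (hj : p ≤ j) : aeval z (remainderPoly b (j + r)) = σ * aeval z (remainderPoly b j) := by
  obtain ⟨k, rfl⟩ := Nat.exists_eq_add_of_le hj
  have := congrArg (aeval z) (remainderPoly_add_period_sub hb k)
  rw [map_mul, hz, mul_zero, map_sub, map_mul, aeval_C, sub_eq_zero] at this
  simpa using this

theorem mul_sum_aeval_remainderPoly_mul_pow {A : Type*} [CommRing A] (x z w : A)
    (hzw : z * w = 1) (n : ℕ) :
    (1 - x * w) * ∑ j ∈ Finset.range n, aeval x (remainderPoly b j) * w ^ j
      = (aeval z (remainderPoly b n) - aeval x (remainderPoly b n)) * w ^ n := by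
  induction n with
  | zero => simp [remainderPoly]
  | succ n ih =>
    rw [Finset.sum_range_succ, mul_add, ih]
    simp only [remainderPoly, map_sub, map_mul, aeval_X, aeval_C]
    linear_combination -(aeval z (remainderPoly b n)) * w ^ n * hzw

theorem hasSum_aeval_remainderPoly_mul_inv_pow_eq_zero {𝕜 : Type*} [NormedField 𝕜] [CompleteSpace 𝕜]
    {x z : 𝕜} (hr : 0 < r) (hσ : IsUnit σ) (hb : ∀ j ≥ p, b (j + r) = σ * b j)
    (hz : aeval z (periodPoly b p r σ) = 0) (hz1 : 1 < ‖z‖) (hxz : x ≠ z)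
    (hx : ∃ M, ∀ n, ‖aeval x (remainderPoly b n)‖ ≤ M) :
    HasSum (fun j => aeval x (remainderPoly b j) * z⁻¹ ^ j) 0 := by
  set w := z⁻¹
  have hz0 : z ≠ 0 := norm_pos_iff.1 (one_pos.trans hz1)
  have hzw : z * w = 1 := mul_inv_cancel₀ hz0
  have hw : ‖w‖ < 1 := by rw [norm_inv]; exact inv_lt_one_of_one_lt₀ hz1
  obtain ⟨Mx, hMx⟩ := hx
  obtain ⟨Mz, hMz⟩ : ∃ M, ∀ n, ‖aeval z (remainderPoly b n)‖ ≤ M := by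
    refine exists_forall_norm_le_of_norm_add_eq (p := p) hr fun j hj => ?_
    rw [aeval_remainderPoly_add_period hb hz hj, norm_mul]
    rcases Int.isUnit_iff.1 hσ with rfl | rfl <;> simp
  have hsum : Summable fun j => aeval x (remainderPoly b j) * w ^ j := by
    refine .of_norm_bounded ((summable_geometric_of_lt_one (norm_nonneg _) hw).mul_left Mx) ?_
    intro j
    rw [norm_mul, norm_pow]
    exact mul_le_mul_of_nonneg_right (hMx j) (by positivity)
  have hlim : Tendsto (fun n => (1 - x * w) * ∑ j ∈ Finset.range n,
      aeval x (remainderPoly b j) * w ^ j) atTop (𝓝 0) := by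
    simp_rw [mul_sum_aeval_remainderPoly_mul_pow x z w hzw]
    refine squeeze_zero_norm (a := fun n => (Mz + Mx) * ‖w‖ ^ n) (fun n => ?_) ?_
    · rw [norm_mul, norm_pow]
      exact mul_le_mul_of_nonneg_right ((norm_sub_le _ _).trans (add_le_add (hMz n) (hMx n)))
        (by positivity)
    · simpa using (tendsto_pow_atTop_nhds_zero_of_lt_one (norm_nonneg _) hw).const_mul (Mz + Mx)
  have hxw : 1 - x * w ≠ 0 := by
    intro h
    apply hxz
    rw [sub_eq_zero, ← hzw] at h
    exact mul_right_cancel₀ (inv_ne_zero hz0) h.symm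
  have hS := tendsto_nhds_unique ((hsum.hasSum.tendsto_sum_nat).const_mul (1 - x * w)) hlim
  rw [← (mul_eq_zero.1 hS).resolve_left hxw]
  exact hsum.hasSum

end RemainderPoly

theorem eq_half_or_eq_neg_half_of_hasSum_eq_zero {a : ℕ → ℝ} {w : ℂ} (ha : ∀ j, |a j| ≤ 1)
    (ha0 : a 0 = 1) (hw : ‖w‖ ≤ 1 / 2) (hs : HasSum (fun j => (a j : ℂ) * w ^ j) 0) :
    w = 1 / 2 ∨ w = -1 / 2 := by
  set t := ‖w‖
  have habs (j : ℕ) (x : ℝ) : |a j * x| ≤ |x| :=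
    abs_mul (a j) x ▸ mul_le_of_le_one_left (abs_nonneg x) (ha j)
  -- Real parts: `0 = 1 + a₁ Re w + Σ_{j≥2} a_j Re(w^j)`, and the tail is `≥ -|w|²/(1-|w|) ≥ -1/2`.
  have hre : HasSum (fun j => a j * (w ^ j).re) 0 := by
    simpa using ((Complex.hasSum_iff _ _).1 hs).1
  have htail : HasSum (fun j => a (j + 2) * (w ^ (j + 2)).re) (-(1 + a 1 * w.re)) := by
    simpa [Finset.sum_range_succ, ha0] using (hasSum_nat_add_iff' 2).2 hre
  have hgeom : HasSum (fun j => -(t ^ 2 * t ^ j)) (-(t ^ 2 * (1 - t)⁻¹)) :=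
    ((hasSum_geometric_of_lt_one (norm_nonneg w) (by linarith)).mul_left (t ^ 2)).neg
  have hle : -(t ^ 2 * (1 - t)⁻¹) ≤ -(1 + a 1 * w.re) := by
    refine hasSum_le (fun j => ?_) hgeom htail
    have h1 : |(w ^ (j + 2)).re| ≤ t ^ 2 * t ^ j := by
      rw [← pow_add, add_comm, ← norm_pow]
      exact Complex.abs_re_le_norm _
    linarith [neg_abs_le (a (j + 2) * (w ^ (j + 2)).re), habs (j + 2) (w ^ (j + 2)).re]
  have ht : t ^ 2 * (1 - t)⁻¹ ≤ 1 / 2 := by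
    rw [← div_eq_mul_inv, div_le_iff₀ (by linarith)]
    nlinarith [norm_nonneg w]
  have hre_w : 1 / 2 ≤ |w.re| := by linarith [neg_abs_le (a 1 * w.re), habs 1 w.re]
  have hnorm : w.re ^ 2 + w.im ^ 2 ≤ (1 / 2) ^ 2 := by
    have := pow_le_pow_left₀ (norm_nonneg w) hw 2
    rw [Complex.sq_norm, Complex.normSq_apply] at this
    nlinarith
  have him : w.im = 0 := by nlinarith [sq_abs w.re, abs_nonneg w.re]
  have hre2 : w.re = 1 / 2 ∨ w.re = -(1 / 2) := by
    rw [← abs_eq (by norm_num)]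
    nlinarith [sq_abs w.re, abs_nonneg w.re]
  rcases hre2 with h | h
  · left; apply Complex.ext <;> simp [h, him]
  · right; apply Complex.ext <;> simp [h, him]; norm_num

theorem eq_algebraMap_of_isRoot_minpoly {K A : Type*} [Field K] [CommRing A] [IsDomain A]
    [Algebra K A] {x : A} (hx : IsIntegral K x) {a : K} (ha : (minpoly K x).IsRoot a) :
    x = algebraMap K A a := by
  have h : minpoly K x = X - C a := by
    rw [← minpoly.eq_X_sub_C' a]
    exact minpoly.eq_of_irreducible_of_monic (minpoly.irreducible hx) (by simpa using ha)
      (minpoly.monic hx)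
  simpa [h, sub_eq_zero] using minpoly.aeval K x

theorem IsGaloisConj.aeval_eq_zero {z : ℂ} {β : ℝ} (hz : IsGaloisConj z β) {P : ℤ[X]}
    (hP : aeval β P = 0) : aeval z P = 0 := by
  obtain ⟨q, hq⟩ := minpoly.dvd ℚ β (p := P.map (algebraMap ℤ ℚ)) (by rwa [aeval_map_algebraMap])
  rw [← aeval_map_algebraMap ℚ, hq, map_mul, hz.2, zero_mul]

theorem IsGaloisConj.ne_ratCast {z : ℂ} {β : ℝ} (hz : IsGaloisConj z β) (hβ : IsIntegral ℚ β)
    (q : ℚ) : z ≠ q := by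
  rintro rfl
  have hroot : (minpoly ℚ β).IsRoot q := by
    have := hz.2
    rw [← eq_ratCast (algebraMap ℚ ℂ), aeval_algebraMap_apply] at this
    simpa using this
  apply hz.1
  rw [eq_algebraMap_of_isRoot_minpoly hβ hroot]
  simp

section GeneralizedBetaTransformation

variable {m : ℕ} {β x : ℝ} {E : ℕ → ℤ}

theorem mul_sub_branchIdx_mem_Icc (h : 0 ≤ β * x) : β * x - branchIdx β x ∈ Set.Icc (0 : ℝ) 1 := by
  rcases h.eq_or_lt with h0 | h0
  · simp [branchIdx, ← h0]
  have hidx : (branchIdx β x : ℝ) = ⌈β * x⌉ - 1 := by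
    have : (0 : ℤ) ≤ ⌈β * x⌉ - 1 := by linarith [Int.ceil_pos.2 h0]
    rw [branchIdx, ← Int.cast_natCast, Int.toNat_of_nonneg this]
    push_cast; ring
  rw [hidx]
  constructor <;> linarith [Int.ceil_lt_add_one (β * x), Int.le_ceil (β * x)]

theorem branchIdx_le (hβ0 : 0 ≤ β) (hβ : β ≤ m + 1) (hx : x ∈ Set.Icc (0 : ℝ) 1) :
    branchIdx β x ≤ m := by
  have : ⌈β * x⌉ ≤ (m : ℤ) + 1 :=
    Int.ceil_le.2 (by push_cast; nlinarith [hx.1, hx.2])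
  unfold branchIdx
  omega

theorem gbeta_mem_Icc (hβ : 0 ≤ β) (hx : x ∈ Set.Icc (0 : ℝ) 1) :
    gbeta β E x ∈ Set.Icc (0 : ℝ) 1 := by
  have h := mul_sub_branchIdx_mem_Icc (mul_nonneg hβ hx.1)
  unfold gbeta
  split_ifs
  · exact h
  · constructor <;> linarith [h.1, h.2]

theorem iterate_gbeta_one_mem_Icc (hβ : 0 ≤ β) (j : ℕ) : (gbeta β E)^[j] 1 ∈ Set.Icc (0 : ℝ) 1 :=
  Set.MapsTo.iterate (s := Set.Icc 0 1) (fun _ => gbeta_mem_Icc hβ) j ⟨zero_le_one, le_rfl⟩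

theorem gbeta_eq_mul (hE : E (branchIdx β x) = 1 ∨ E (branchIdx β x) = -1) :
    gbeta β E x = E (branchIdx β x) * (β * x -
      ((if E (branchIdx β x) = 1 then branchIdx β x else branchIdx β x + 1 : ℕ) : ℝ)) := by
  rcases hE with hE | hE <;> simp [gbeta, hE]; ring

theorem IsGBetaValid.pos (hv : IsGBetaValid m β E) : 0 < β :=
  lt_of_le_of_lt (Nat.cast_nonneg m) hv.2.1

theorem IsGBetaValid.esign_eq_one_or_neg_one (hv : IsGBetaValid m β E) (j : ℕ) :
    esign β E j = 1 ∨ esign β E j = -1 :=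
  hv.2.2.2 _ (branchIdx_le hv.pos.le hv.2.2.1 (iterate_gbeta_one_mem_Icc hv.pos.le (j - 1)))

theorem IsGBetaValid.isUnit_esign (hv : IsGBetaValid m β E) (j : ℕ) : IsUnit (esign β E j) :=
  Int.isUnit_iff.2 (hv.esign_eq_one_or_neg_one j)

theorem IsGBetaValid.isUnit_csign (hv : IsGBetaValid m β E) (j : ℕ) : IsUnit (csign β E j) :=
  IsUnit.prod_iff.2 fun l _ => hv.isUnit_esign l

theorem csign_succ {j : ℕ} (hj : 1 ≤ j) : csign β E (j + 1) = csign β E j * esign β E j :=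
  Finset.prod_Ico_succ_top hj _

theorem sorbit_zero : sorbit β E 0 = 1 := by simp [sorbit, csign]

theorem IsGBetaValid.abs_sorbit_le (hv : IsGBetaValid m β E) (j : ℕ) : |sorbit β E j| ≤ 1 := by
  have hs : |(csign β E (j + 1) : ℝ)| = 1 := by
    exact_mod_cast Int.isUnit_iff_abs_eq.1 (hv.isUnit_csign (j + 1))
  have hx := iterate_gbeta_one_mem_Icc (E := E) hv.pos.le j
  rw [sorbit, abs_mul, hs, one_mul, abs_of_nonneg hx.1]
  exact hx.2

noncomputable def signedDigit (β : ℝ) (E : ℕ → ℤ) (j : ℕ) : ℤ :=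
  csign β E (j + 1) * digit β E (j + 1)

theorem IsGBetaValid.iterate_succ_gbeta_one (hv : IsGBetaValid m β E) (j : ℕ) :
    (gbeta β E)^[j + 1] 1 = esign β E (j + 1) * (β * (gbeta β E)^[j] 1 - digit β E (j + 1)) := by
  rw [Function.iterate_succ_apply']
  exact gbeta_eq_mul (hv.esign_eq_one_or_neg_one (j + 1))

theorem IsGBetaValid.sorbit_succ (hv : IsGBetaValid m β E) (j : ℕ) :
    sorbit β E (j + 1) = β * sorbit β E j - signedDigit β E j := by
  have he : (esign β E (j + 1) : ℝ) * esign β E (j + 1) = 1 := by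
    exact_mod_cast Int.isUnit_mul_self (hv.isUnit_esign (j + 1))
  rw [sorbit, csign_succ (Nat.le_add_left 1 j), hv.iterate_succ_gbeta_one, sorbit,
    signedDigit]
  push_cast
  linear_combination (csign β E (j + 1) : ℝ) * (β * (gbeta β E)^[j] 1 - digit β E (j + 1)) * he

theorem csign_add_period (hv : IsGBetaValid m β E) {p r j : ℕ}
    (hper : (gbeta β E)^[p + r] 1 = (gbeta β E)^[p] 1) (hj : p ≤ j) :
    csign β E (j + r + 1) = csign β E (p + r + 1) * csign β E (p + 1) * csign β E (j + 1) := by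
  induction j, hj using Nat.le_induction with
  | base => rw [mul_assoc, Int.isUnit_mul_self (hv.isUnit_csign _), mul_one]
  | succ j hj ih =>
    have he : esign β E (j + r + 1) = esign β E (j + 1) := by
      simp only [esign, Nat.add_sub_cancel, Function.iterate_add_eq_of_iterate_add_eq hper hj]
    rw [show j + 1 + r + 1 = j + r + 1 + 1 by omega, csign_succ (j := j + r + 1) (by omega),
      csign_succ (j := j + 1) (by omega), ih, he, mul_assoc]

theorem sorbit_add_period (hv : IsGBetaValid m β E) {p r j : ℕ}
    (hper : (gbeta β E)^[p + r] 1 = (gbeta β E)^[p] 1) (hj : p ≤ j) :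
    sorbit β E (j + r) = (csign β E (p + r + 1) * csign β E (p + 1) : ℤ) * sorbit β E j := by
  rw [sorbit, sorbit, csign_add_period hv hper hj,
    Function.iterate_add_eq_of_iterate_add_eq hper hj]
  push_cast
  ring

theorem signedDigit_add_period (hv : IsGBetaValid m β E) {p r j : ℕ}
    (hper : (gbeta β E)^[p + r] 1 = (gbeta β E)^[p] 1) (hj : p ≤ j) :
    signedDigit β E (j + r) = csign β E (p + r + 1) * csign β E (p + 1) * signedDigit β E j := by
  have hd : digit β E (j + r + 1) = digit β E (j + 1) := by
    simp only [digit, Nat.add_sub_cancel, Function.iterate_add_eq_of_iterate_add_eq hper hj]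
  rw [signedDigit, signedDigit, csign_add_period hv hper hj, hd, mul_assoc]

theorem IsGBetaValid.aeval_remainderPoly_signedDigit (hv : IsGBetaValid m β E) (n : ℕ) :
    aeval β (remainderPoly (signedDigit β E) n) = sorbit β E n := by
  induction n with
  | zero => simp [remainderPoly, sorbit_zero]
  | succ n ih => simp [remainderPoly, ih, hv.sorbit_succ]

theorem IsPCF.exists_periodPoly_aeval_eq_zero (hv : IsGBetaValid m β E) (hpcf : IsPCF β E) :
    ∃ p r σ, 0 < r ∧ IsUnit σ ∧ (∀ j ≥ p, signedDigit β E (j + r) = σ * signedDigit β E j) ∧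
      aeval β (periodPoly (signedDigit β E) p r σ) = 0 := by
  obtain ⟨p, q, hpq, hper⟩ := hpcf.exists_lt_map_eq_of_forall_mem
    (f := fun n => (gbeta β E)^[n] 1) fun n => by exact ⟨n, rfl⟩
  obtain ⟨r, rfl⟩ := Nat.exists_eq_add_of_lt hpq
  refine ⟨p, r + 1, _, r.succ_pos, (hv.isUnit_csign _).mul (hv.isUnit_csign _),
    fun j hj => signedDigit_add_period hv hper.symm hj, ?_⟩
  rw [periodPoly, map_sub, map_mul, aeval_C, hv.aeval_remainderPoly_signedDigit,
    hv.aeval_remainderPoly_signedDigit, sorbit_add_period hv hper.symm le_rfl]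
  simp

end GeneralizedBetaTransformation

/-- If `β` is a generalized Parry number, then all Galois conjugates `z` of `β`
satisfy `|z| < 2`. -/
theorem stmt6 (β : ℝ) (h : IsGenParry β) (z : ℂ) (hz : IsGaloisConj z β) : ‖z‖ < 2 := by
  obtain ⟨-, m, E, hv, hpcf⟩ := h
  obtain ⟨p, r, σ, hr, hσ, hb, hQβ⟩ := hpcf.exists_periodPoly_aeval_eq_zero hv
  have hint : IsIntegral ℚ β :=
    IsIntegral.tower_top (A := ℚ) ⟨_, monic_periodPoly hr, hQβ⟩
  have hc (n : ℕ) : aeval (β : ℂ) (remainderPoly (signedDigit β E) n) = sorbit β E n := by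
    rw [← Complex.coe_algebraMap, aeval_algebraMap_apply, hv.aeval_remainderPoly_signedDigit]
  by_contra! hz2
  have hsum := hasSum_aeval_remainderPoly_mul_inv_pow_eq_zero hr hσ hb (hz.aeval_eq_zero hQβ)
    (by linarith) hz.1.symm ⟨1, fun n => by simpa [hc] using hv.abs_sorbit_le n⟩
  simp only [hc] at hsum
  have hw : ‖z⁻¹‖ ≤ 1 / 2 := by
    rw [norm_inv, one_div]
    exact inv_anti₀ two_pos hz2
  rcases eq_half_or_eq_neg_half_of_hasSum_eq_zero hv.abs_sorbit_le sorbit_zero hw hsum with h | h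
  · exact hz.ne_ratCast hint 2 (by rw [← inv_inv z, h]; norm_num)
  · exact hz.ne_ratCast hint (-2) (by rw [← inv_inv z, h]; norm_num)
end

section
/- Suppose n ≥ 2 and M(1), …, M(n) are distinct non-zero integers such that M(1) ≥ 2, |M(j)| + 1 < M(1) for all 2 ≤ j ≤ n, and |M(j)| ≠ |M(k)| − 1 for all 1 ≤ j, k ≤ n. Then the equation x = M(1) + M(2)/x + M(3)/x² + … + M(n)/x^{n−1} has a real solution β > 1 which is a generalized Parry number. -/
open Finset

/-!
Put `c_j(β) = Σ_{j < i ≤ n} M(i) β^{j-i}` (`tailSum`). Then `β c_j = M(j+1) + c_{j+1}`,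
`c_n = 0`, and the equation to solve is `c_0(β) = 1`. Since `|M(i)| ≤ M(1) - 2` for `i ≥ 2`,
backward induction gives `|c_j| < (M(1) - 2)/(β - 1)` for `j ≥ 1`, so `c_0` crosses `1` on
`(M(1) - 1, M(1) + 1)`, and at such a root `|c_j| < 1` for `j ≥ 1`.

Then `M(j+1)` and `c_j` have the same sign and `β |c_j| = |M(j+1)| + t` with `|t| = |c_{j+1}|`,
where `t < 0` exactly when `M(j+1) c_{j+1} < 0`. Making the branch `|M(j+1)| - 1` orientation
reversing exactly in that case (`branchSign`) gives `f(|c_j|) = |c_{j+1}|` (or `1` when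
`c_{j+1} = 0`); the condition `|M(j)| ≠ |M(k)| - 1` guarantees that the branch `|M(j+1)|`,
needed when `t > 0`, is never reversed. Hence the finite set `{|c_0|, …, |c_n|} ∋ 1` is
invariant under `f`.
-/

noncomputable def tailSum (a : ℕ → ℝ) (n : ℕ) (β : ℝ) (j : ℕ) : ℝ :=
  ∑ i ∈ Ioc j n, a i * β ^ ((j : ℤ) - i)

section tailSum

variable {a : ℕ → ℝ} {n j : ℕ} {β : ℝ}

theorem tailSum_of_le (h : n ≤ j) : tailSum a n β j = 0 := by
  rw [tailSum, Ioc_eq_empty (by omega), sum_empty]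

theorem mul_tailSum (hβ : β ≠ 0) (hj : j < n) :
    β * tailSum a n β j = a (j + 1) + tailSum a n β (j + 1) := by
  rw [tailSum, tailSum, ← insert_Ioc_add_one_left_eq_Ioc hj, sum_insert (by simp), mul_add,
    mul_sum]
  congr 1
  · rw [show (j : ℤ) - (j + 1 : ℕ) = -1 by push_cast; ring, zpow_neg_one]
    field_simp
  · refine sum_congr rfl fun i _ ↦ ?_
    rw [show ((j + 1 : ℕ) : ℤ) - i = (j - i) + 1 by push_cast; ring, zpow_add_one₀ hβ]
    ring

theorem abs_tailSum_lt {K : ℝ} (hβ : 1 < β) (hK : 0 < K) (ha : ∀ i, j < i → i ≤ n → |a i| ≤ K) :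
    |tailSum a n β j| < K / (β - 1) := by
  have hβ0 : 0 < β := by linarith
  have hK' : 0 < K / (β - 1) := div_pos hK (by linarith)
  induction j using Nat.strong_decreasing_induction with
  | base => exact ⟨n, fun j hj _ ↦ by rwa [tailSum_of_le hj.le, abs_zero]⟩
  | step j ih =>
    rcases le_or_gt n j with hnj | hjn
    · rwa [tailSum_of_le hnj, abs_zero]
    have hnext := ih (j + 1) (by omega) fun i hi hin ↦ ha i (by omega) hin
    have hcur := mul_tailSum (a := a) hβ0.ne' hjn
    have hbound : β * |tailSum a n β j| ≤ K + |tailSum a n β (j + 1)| := by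
      calc β * |tailSum a n β j| = |a (j + 1) + tailSum a n β (j + 1)| := by
            rw [← hcur, abs_mul, abs_of_pos hβ0]
        _ ≤ |a (j + 1)| + |tailSum a n β (j + 1)| := abs_add_le _ _
        _ ≤ K + |tailSum a n β (j + 1)| := by gcongr; exact ha _ (by omega) hjn
    rw [lt_div_iff₀ (by linarith)] at hnext ⊢
    nlinarith

theorem continuousOn_tailSum : ContinuousOn (fun β ↦ tailSum a n β j) (Set.Ioi 0) := by
  unfold tailSum
  fun_prop (disch := exact fun x hx ↦ Or.inl (ne_of_gt hx))

theorem exists_tailSum_zero_eq_one (hn : 0 < n) (h3 : 3 ≤ a 1)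
    (ha : ∀ i, 1 < i → i ≤ n → |a i| ≤ a 1 - 2) :
    ∃ β ∈ Set.Ioo (a 1 - 1) (a 1 + 1), tailSum a n β 0 = 1 := by
  have hval : ∀ β, 1 < β → tailSum a n β 0 = (a 1 + tailSum a n β 1) / β := fun β hβ ↦ by
    rw [eq_div_iff (by positivity), mul_comm, mul_tailSum (by positivity) hn]
  have hbound : ∀ β, 1 < β → |tailSum a n β 1| < (a 1 - 2) / (β - 1) :=
    fun β hβ ↦ abs_tailSum_lt hβ (by linarith) ha
  have hL : 1 < tailSum a n (a 1 - 1) 0 := by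
    have h := hbound (a 1 - 1) (by linarith)
    rw [show a 1 - 1 - 1 = a 1 - 2 by ring, div_self (by linarith)] at h
    rw [hval _ (by linarith), lt_div_iff₀ (by linarith)]
    linarith [neg_abs_le (tailSum a n (a 1 - 1) 1)]
  have hU : tailSum a n (a 1 + 1) 0 < 1 := by
    have h := hbound (a 1 + 1) (by linarith)
    have h' : (a 1 - 2) / a 1 < 1 := by rw [div_lt_one (by linarith)]; linarith
    rw [show a 1 + 1 - 1 = a 1 by ring] at h
    rw [hval _ (by linarith), div_lt_one (by linarith)]
    linarith [le_abs_self (tailSum a n (a 1 + 1) 1)]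
  have hcont : ContinuousOn (fun β ↦ tailSum a n β 0) (Set.Icc (a 1 - 1) (a 1 + 1)) :=
    continuousOn_tailSum.mono fun x hx ↦ show 0 < x by linarith [hx.1]
  exact intermediate_value_Ioo' (by linarith) hcont ⟨hU, hL⟩

theorem eq_sum_of_tailSum_zero_eq_one (hβ : β ≠ 0)
    (h : tailSum a n β 0 = 1) : β = ∑ j ∈ Icc 1 n, a j * β ^ (1 - (j : ℤ)) := by
  calc β = β * tailSum a n β 0 := by rw [h, mul_one]
    _ = _ := by
      rw [tailSum, mul_sum, ← Icc_add_one_left_eq_Ioc]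
      refine sum_congr rfl fun j _ ↦ ?_
      rw [show (1 : ℤ) - j = ((0 : ℕ) : ℤ) - j + 1 by push_cast; ring, zpow_add_one₀ hβ]
      ring

end tailSum

theorem pos_mul_of_mul_eq_add {β m c c' : ℝ} (hβ : 0 < β) (h : β * c = m + c')
    (hc' : |c'| < |m|) : 0 < m * c := by
  have hmc' : |m * c'| < m * m := by
    rw [abs_mul, ← abs_mul_abs_self m]
    exact mul_lt_mul_of_pos_left hc' ((abs_nonneg c').trans_lt hc')
  have : 0 < β * (m * c) := by
    rw [mul_left_comm, h]
    linarith [neg_abs_le (m * c')]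
  exact pos_of_mul_pos_right this hβ.le

theorem exists_mul_abs_eq {β m c c' : ℝ} (hβ : 0 < β) (h : β * c = m + c')
    (hc' : |c'| < |m|) :
    ∃ t, β * |c| = |m| + t ∧ |t| = |c'| ∧ (t < 0 → m * c' < 0) ∧ (0 < t → 0 < m * c') := by
  have hmc := pos_mul_of_mul_eq_add hβ h hc'
  rcases lt_or_gt_of_ne (show m ≠ 0 by rintro rfl; simp at hmc) with hm | hm
  · have hc : c < 0 := neg_of_mul_pos_right hmc hm.le
    refine ⟨-c', ?_, abs_neg c', fun ht ↦ ?_, fun ht ↦ ?_⟩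
    · rw [abs_of_neg hc, abs_of_neg hm]; linarith
    · exact mul_neg_of_neg_of_pos hm (by linarith)
    · exact mul_pos_of_neg_of_neg hm (by linarith)
  · have hc : 0 < c := pos_of_mul_pos_right hmc hm.le
    refine ⟨c', ?_, rfl, fun ht ↦ mul_neg_of_pos_of_neg hm ht, fun ht ↦ mul_pos hm ht⟩
    rw [abs_of_pos hc, abs_of_pos hm, h]

section gbeta

variable {β : ℝ} {E : ℕ → ℤ}

theorem branchIdx_eq {x : ℝ} {k : ℕ} (h₁ : k < β * x) (h₂ : β * x ≤ k + 1) :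
    branchIdx β x = k := by
  have : ⌈β * x⌉ = k + 1 := Int.ceil_eq_iff.2 ⟨by push_cast; linarith, by push_cast; linarith⟩
  rw [branchIdx, this]
  simp

theorem gbeta_zero_eq_zero_or_one (hE : E 0 = 1 ∨ E 0 = -1) :
    gbeta β E 0 = 0 ∨ gbeta β E 0 = 1 := by
  have h0 : branchIdx β 0 = 0 := by simp [branchIdx]
  rcases hE with hE | hE <;> simp [gbeta, h0, hE]

theorem gbeta_eq_abs_or_eq_one {x t : ℝ} (k : ℕ) (hx : β * x = k + 1 + t)
    (ht : |t| < 1) (hE : E k = 1 ∨ E k = -1) (hneg : t < 0 → E k = -1)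
    (hpos : 0 < t → E (k + 1) = 1) : gbeta β E x = |t| ∨ gbeta β E x = 1 := by
  obtain ⟨ht₁, ht₂⟩ := abs_lt.1 ht
  rcases lt_trichotomy t 0 with ht0 | rfl | ht0
  · have hk : branchIdx β x = k := branchIdx_eq (by linarith) (by linarith)
    left
    rw [gbeta, hk, hneg ht0, if_neg (by decide), abs_of_neg ht0]
    linarith
  · have hk : branchIdx β x = k := branchIdx_eq (by linarith) (by linarith)
    rcases hE with hE | hE
    · right; rw [gbeta, hk, if_pos hE]; linarith
    · left; rw [gbeta, hk, hE, if_neg (by decide)]; simp; linarith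
  · have hk : branchIdx β x = k + 1 :=
      branchIdx_eq (by push_cast; linarith) (by push_cast; linarith)
    left
    rw [gbeta, hk, if_pos (hpos ht0), abs_of_pos ht0]
    push_cast
    linarith

theorem gbeta_abs_eq_abs_or_eq_one {m c c' : ℝ} (hβ : 0 < β) (k : ℕ)
    (hm : |m| = k + 1) (h : β * c = m + c') (hc' : |c'| < 1) (hE : E k = 1 ∨ E k = -1)
    (hneg : m * c' < 0 → E k = -1) (hpos : 0 < m * c' → E (k + 1) = 1) :
    gbeta β E |c| = |c'| ∨ gbeta β E |c| = 1 := by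
  obtain ⟨t, hx, ht, htneg, htpos⟩ :=
    exists_mul_abs_eq hβ h (hc'.trans_le (by rw [hm]; linarith [k.cast_nonneg (α := ℝ)]))
  rw [← ht]
  exact gbeta_eq_abs_or_eq_one k (by rw [hx, hm]) (ht ▸ hc') hE (hneg ∘ htneg) (hpos ∘ htpos)

theorem isPCF_of_mapsTo {S : Set ℝ} (hS : S.Finite) (h1 : 1 ∈ S)
    (h : Set.MapsTo (gbeta β E) S S) : IsPCF β E :=
  hS.subset <| by rintro _ ⟨j, rfl⟩; exact h.iterate j h1

theorem isGenParry_of_isPCF (hβ : 1 < β) (hE : ∀ k, E k = 1 ∨ E k = -1)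
    (h : IsPCF β E) : IsGenParry β := by
  have h2 : 2 ≤ ⌈β⌉₊ := Nat.lt_ceil.2 (by exact_mod_cast hβ)
  have hcast : ((⌈β⌉₊ - 1 : ℕ) : ℝ) = ⌈β⌉₊ - 1 := by rw [Nat.cast_sub (by omega)]; simp
  refine ⟨hβ, ⌈β⌉₊ - 1, E, ⟨by omega, ?_, ?_, fun k _ ↦ hE k⟩, h⟩
  · linarith [Nat.ceil_lt_add_one (by linarith : 0 ≤ β)]
  · linarith [Nat.le_ceil β]

end gbeta

open Classical in
noncomputable def branchSign (M : ℕ → ℤ) (n : ℕ) (β : ℝ) (k : ℕ) : ℤ :=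
  if ∃ j ∈ Icc 1 n, (M j : ℝ) * tailSum (fun i ↦ M i) n β j < 0 ∧ (M j).natAbs = k + 1
  then -1 else 1

theorem branchSign_eq_one_or_neg_one (M : ℕ → ℤ) (n : ℕ) (β : ℝ) (k : ℕ) :
    branchSign M n β k = 1 ∨ branchSign M n β k = -1 := by
  unfold branchSign
  split_ifs <;> simp

theorem isPCF_branchSign {M : ℕ → ℤ} {n : ℕ} {β : ℝ} (hβ : 0 < β)
    (h0 : tailSum (fun i ↦ M i) n β 0 = 1) (hc : ∀ j, 1 ≤ j → |tailSum (fun i ↦ M i) n β j| < 1)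
    (hnz : ∀ j, 1 ≤ j → j ≤ n → M j ≠ 0)
    (hne : ∀ j k, 1 ≤ j → j ≤ n → 1 ≤ k → k ≤ n → |M j| ≠ |M k| - 1) :
    IsPCF β (branchSign M n β) := by
  set c := tailSum (fun i ↦ (M i : ℝ)) n β
  have hE := branchSign_eq_one_or_neg_one M n β
  refine isPCF_of_mapsTo ((Set.finite_Iic n).image fun j ↦ |c j|)
    ⟨0, by simp, by simp [c, h0]⟩ ?_
  rintro _ ⟨j, hj, rfl⟩
  rcases (show j ≤ n from hj).lt_or_eq with hjn | rfl
  · have hM : 0 < (M (j + 1)).natAbs := Int.natAbs_pos.2 (hnz (j + 1) (by omega) hjn)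
    have hm : |(M (j + 1) : ℝ)| = ((M (j + 1)).natAbs - 1 : ℕ) + 1 := by
      rw [Nat.cast_sub (by omega), Nat.cast_natAbs]
      simp
    have hneg :
        (M (j + 1) : ℝ) * c (j + 1) < 0 → branchSign M n β ((M (j + 1)).natAbs - 1) = -1 :=
      fun h ↦ if_pos ⟨j + 1, mem_Icc.2 ⟨by omega, hjn⟩, h, by omega⟩
    have hpos :
        0 < (M (j + 1) : ℝ) * c (j + 1) → branchSign M n β ((M (j + 1)).natAbs - 1 + 1) = 1 := by
      rintro -
      refine if_neg ?_
      rintro ⟨j', hj', -, hj'abs⟩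
      rw [mem_Icc] at hj'
      refine hne (j + 1) j' (by omega) hjn hj'.1 hj'.2 ?_
      rw [← Int.natCast_natAbs, ← Int.natCast_natAbs]
      omega
    rcases gbeta_abs_eq_abs_or_eq_one hβ _ hm (mul_tailSum (a := fun i ↦ (M i : ℝ)) hβ.ne' hjn)
      (hc (j + 1) (by omega)) (hE _) hneg hpos with hstep | hstep
    · exact ⟨j + 1, show j + 1 ≤ n from hjn, hstep.symm⟩
    · exact ⟨0, by simp, by simp [c, h0, hstep]⟩
  · have hcn : c j = 0 := tailSum_of_le le_rfl
    rcases gbeta_zero_eq_zero_or_one (β := β) (hE 0) with h | h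
    · exact ⟨j, Set.mem_Iic.2 le_rfl, by simp [hcn, h]⟩
    · exact ⟨0, by simp, by simp [c, hcn, h0, h]⟩

theorem stmt14_general (n : ℕ) (hn : 2 ≤ n) (M : ℕ → ℤ)
    (hnz : ∀ j : ℕ, 1 ≤ j → j ≤ n → M j ≠ 0)
    (hlt : ∀ j : ℕ, 2 ≤ j → j ≤ n → |M j| + 1 < M 1)
    (hne : ∀ j k : ℕ, 1 ≤ j → j ≤ n → 1 ≤ k → k ≤ n → |M j| ≠ |M k| - 1) :
    ∃ β : ℝ, 1 < β ∧ β = ∑ j ∈ Finset.Icc 1 n, (M j : ℝ) * β ^ (1 - (j : ℤ)) ∧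
      IsGenParry β := by
  have hM1 : (3 : ℝ) ≤ M 1 := by
    have h2 := Int.one_le_abs (hnz 2 (by omega) hn)
    exact_mod_cast (by linarith [hlt 2 le_rfl hn] : (3 : ℤ) ≤ M 1)
  have hbound : ∀ i, 1 < i → i ≤ n → |(M i : ℝ)| ≤ M 1 - 2 := fun i hi hin ↦ by
    have h := hlt i hi hin
    rw [← Int.cast_abs]
    exact_mod_cast (by omega : |M i| ≤ M 1 - 2)
  obtain ⟨β, ⟨hβL, -⟩, hβ⟩ :=
    exists_tailSum_zero_eq_one (a := fun i ↦ (M i : ℝ)) (by omega) hM1 hbound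
  have hβ1 : 1 < β := by linarith
  have htail : ∀ j, 1 ≤ j → |tailSum (fun i ↦ (M i : ℝ)) n β j| < 1 := fun j _ ↦
    (abs_tailSum_lt hβ1 (by linarith) fun i hi hin ↦ hbound i (by omega) hin).trans_le
      (by rw [div_le_one (by linarith)]; linarith)
  exact ⟨β, hβ1, eq_sum_of_tailSum_zero_eq_one (by positivity) hβ,
    isGenParry_of_isPCF hβ1 (branchSign_eq_one_or_neg_one M n β)
      (isPCF_branchSign (by positivity) hβ htail hnz hne)⟩

/-- If `M(1), …, M(n)` (`n ≥ 2`) are distinct non-zero integers with `M(1) ≥ 2`,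
`|M(j)| + 1 < M(1)` for `2 ≤ j ≤ n`, and `|M(j)| ≠ |M(k)| − 1` for all `j, k`, then
`x = M(1) + M(2)/x + … + M(n)/x^{n−1}` has a real solution `β > 1` which is a generalized
Parry number. -/
theorem stmt14 (n : ℕ) (hn : 2 ≤ n) (M : ℕ → ℤ)
    (hdist : ∀ j k : ℕ, 1 ≤ j → j ≤ n → 1 ≤ k → k ≤ n → j ≠ k → M j ≠ M k)
    (hnz : ∀ j : ℕ, 1 ≤ j → j ≤ n → M j ≠ 0)
    (hM1 : 2 ≤ M 1)
    (hlt : ∀ j : ℕ, 2 ≤ j → j ≤ n → |M j| + 1 < M 1)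
    (hne : ∀ j k : ℕ, 1 ≤ j → j ≤ n → 1 ≤ k → k ≤ n → |M j| ≠ |M k| - 1) :
    ∃ β : ℝ, 1 < β ∧ β = ∑ j ∈ Finset.Icc 1 n, (M j : ℝ) * β ^ (1 - (j : ℤ)) ∧
      IsGenParry β :=
  stmt14_general n hn M hnz hlt hne
end
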